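/- If ξ is a Killing vector field on ℝ³ (i.e. ∂ᵢξⱼ + ∂ⱼξᵢ = 0) which is nowhere zero, then the field a = ξ/|ξ|² satisfies div a = 0 and a × curl a = 0, i.e. a is a Beltrami flow. -/

import Mathlib

/-!
Write `N = |ξ|²` and `a = N⁻¹ ξ`. Antisymmetry of `Dξ` gives `div ξ = 0`, `ξ × curl ξ = ∇N`
and hence `ξ · ∇N = 0`. The product rules then give `div a = N⁻¹ div ξ - N⁻² ∇N · ξ = 0` and,
with `curl a = N⁻¹ curl ξ - N⁻² ∇N × ξ` and `ξ × (∇N × ξ) = N ∇N - (ξ · ∇N) ξ`,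
`a × curl a = N⁻² ∇N - N⁻² ∇N = 0`.
-/

noncomputable section

/-- ℝ³ as functions `Fin 3 → ℝ`. -/
abbrev V3 : Type := Fin 3 → ℝ

/-- Partial derivative `∂ᵢ f` at `x`. -/
def pd (i : Fin 3) (f : V3 → ℝ) (x : V3) : ℝ := fderiv ℝ f x (Pi.single i 1)

/-- Gradient. -/
def grad3 (f : V3 → ℝ) (x : V3) : V3 := fun i => pd i f x

/-- Divergence. -/
def div3 (u : V3 → V3) (x : V3) : ℝ := ∑ i, pd i (fun y => u y i) x

/-- Curl. -/
def curl3 (u : V3 → V3) (x : V3) : V3 :=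
  ![pd 1 (fun y => u y 2) x - pd 2 (fun y => u y 1) x,
    pd 2 (fun y => u y 0) x - pd 0 (fun y => u y 2) x,
    pd 0 (fun y => u y 1) x - pd 1 (fun y => u y 0) x]

/-- Cross product on ℝ³. -/
def cross3 (a b : V3) : V3 :=
  ![a 1 * b 2 - a 2 * b 1, a 2 * b 0 - a 0 * b 2, a 0 * b 1 - a 1 * b 0]

/-- Convective derivative `(u·∇)v`. -/
def conv3 (u v : V3 → V3) (x : V3) : V3 :=
  fun i => ∑ j, u x j * pd j (fun y => v y i) x

/-- Squared norm `|u|²` of a vector field. -/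
def nsq (u : V3 → V3) (x : V3) : ℝ := ∑ i, u x i ^ 2

/-- Directional derivative `u·∇f`. -/
def dirDeriv (u : V3 → V3) (f : V3 → ℝ) (x : V3) : ℝ := ∑ i, u x i * pd i f x

open Matrix

lemma cross3_eq_crossProduct (u v : V3) : cross3 u v = u ⨯₃ v := rfl

lemma nsq_eq_dotProduct (u : V3 → V3) (x : V3) : nsq u x = u x ⬝ᵥ u x := by
  simp [nsq, dotProduct, sq]

section PartialDerivatives

variable {f g : V3 → ℝ} {u : V3 → V3} {x : V3}

lemma pd_mul (i : Fin 3) (hf : DifferentiableAt ℝ f x) (hg : DifferentiableAt ℝ g x) :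
    pd i (fun y => f y * g y) x = pd i f x * g x + f x * pd i g x := by
  simp only [pd, fderiv_fun_mul hf hg, _root_.add_apply, _root_.smul_apply, smul_eq_mul]
  ring

lemma pd_inv (i : Fin 3) (hf : DifferentiableAt ℝ f x) (hx : f x ≠ 0) :
    pd i (fun y => (f y)⁻¹) x = -(f x ^ 2)⁻¹ * pd i f x := by
  have h : HasFDerivAt (fun y => (f y)⁻¹) (-(f x ^ 2)⁻¹ • fderiv ℝ f x) x :=
    (hasDerivAt_inv hx).comp_hasFDerivAt x hf.hasFDerivAt
  simp [pd, h.fderiv]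

lemma grad3_inv (hf : DifferentiableAt ℝ f x) (hx : f x ≠ 0) :
    grad3 (fun y => (f y)⁻¹) x = -(f x ^ 2)⁻¹ • grad3 f x := by
  ext i
  simp [grad3, pd_inv i hf hx]

lemma differentiableAt_nsq (hu : DifferentiableAt ℝ u x) : DifferentiableAt ℝ (nsq u) x := by
  have := differentiableAt_pi.1 hu
  unfold nsq
  fun_prop

lemma pd_nsq (i : Fin 3) (hu : DifferentiableAt ℝ u x) :
    pd i (nsq u) x = 2 * ∑ j, u x j * pd i (fun y => u y j) x := by
  have h : HasFDerivAt (nsq u) (∑ j, (2 * u x j) • fderiv ℝ (fun y => u y j) x) x := by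
    refine HasFDerivAt.fun_sum fun j _ => ?_
    simpa using ((differentiableAt_pi.1 hu j).hasFDerivAt.pow 2)
  simp [pd, h.fderiv, Finset.mul_sum, mul_assoc]

lemma div3_smul (hf : DifferentiableAt ℝ f x) (hu : DifferentiableAt ℝ u x) :
    div3 (fun y => f y • u y) x = f x * div3 u x + grad3 f x ⬝ᵥ u x := by
  simp only [div3, grad3, dotProduct, Pi.smul_apply, smul_eq_mul,
    pd_mul _ hf (differentiableAt_pi.1 hu _), Finset.sum_add_distrib, Finset.mul_sum]
  ring

lemma curl3_smul (hf : DifferentiableAt ℝ f x) (hu : DifferentiableAt ℝ u x) :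
    curl3 (fun y => f y • u y) x = f x • curl3 u x + grad3 f x ⨯₃ u x := by
  simp only [curl3, grad3, cross_apply, Pi.smul_apply, smul_eq_mul,
    pd_mul _ hf (differentiableAt_pi.1 hu _)]
  ext i
  fin_cases i <;>
  · simp only [Fin.isValue, Fin.zero_eta, Fin.mk_one, Fin.reduceFinMk, cons_val, cons_val_zero,
      cons_val_one, smul_cons, smul_eq_mul, smul_empty, Pi.add_apply]
    ring

end PartialDerivatives

def IsKillingAt (ξ : V3 → V3) (x : V3) : Prop :=
  ∀ i j, pd i (fun y => ξ y j) x + pd j (fun y => ξ y i) x = 0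

namespace IsKillingAt

variable {ξ : V3 → V3} {x : V3}

lemma pd_self (hK : IsKillingAt ξ x) (i : Fin 3) : pd i (fun y => ξ y i) x = 0 := by
  linarith [hK i i]

lemma div3_eq_zero (hK : IsKillingAt ξ x) : div3 ξ x = 0 := by
  simp [div3, hK.pd_self]

lemma cross3_curl3 (hK : IsKillingAt ξ x) (hξ : DifferentiableAt ℝ ξ x) :
    cross3 (ξ x) (curl3 ξ x) = grad3 (nsq ξ) x := by
  have hanti (i j : Fin 3) : pd j (fun y => ξ y i) x = -pd i (fun y => ξ y j) x :=
    eq_neg_of_add_eq_zero_right (hK i j)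
  ext i
  fin_cases i <;>
  · simp only [cross3, curl3, grad3, Fin.isValue, Fin.zero_eta, Fin.mk_one, Fin.reduceFinMk,
      cons_val, cons_val_zero, cons_val_one, pd_nsq _ hξ, Fin.sum_univ_three, hK.pd_self,
      hanti 0 1, hanti 0 2, hanti 1 2]
    ring

lemma grad3_nsq_dotProduct (hK : IsKillingAt ξ x) (hξ : DifferentiableAt ℝ ξ x) :
    grad3 (nsq ξ) x ⬝ᵥ ξ x = 0 := by
  rw [← hK.cross3_curl3 hξ, cross3_eq_crossProduct, dotProduct_comm, dot_self_cross]

end IsKillingAt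

/-- For a nowhere-zero Killing field `ξ` on ℝ³, the field `a = ξ/|ξ|²`
is a Beltrami flow: `div a = 0` and `a × curl a = 0`. -/
theorem beltrami_of_killing (ξ : V3 → V3) (hξ : ContDiff ℝ 2 ξ)
    (hkill : ∀ x (i j : Fin 3),
      pd i (fun y => ξ y j) x + pd j (fun y => ξ y i) x = 0)
    (hne : ∀ x, ξ x ≠ 0)
    (a : V3 → V3) (ha : ∀ x, a x = (nsq ξ x)⁻¹ • ξ x) (x : V3) :
    div3 a x = 0 ∧ cross3 (a x) (curl3 a x) = 0 := by
  have hK : IsKillingAt ξ x := hkill x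
  have hξx : DifferentiableAt ℝ ξ x := hξ.differentiable (by norm_num) x
  have hN : nsq ξ x ≠ 0 := by rw [nsq_eq_dotProduct]; exact dotProduct_self_eq_zero.not.2 (hne x)
  have hNd := differentiableAt_nsq hξx
  have hinv : DifferentiableAt ℝ (fun y => (nsq ξ y)⁻¹) x := hNd.inv hN
  have hgrad := grad3_inv hNd hN
  have hdot := hK.grad3_nsq_dotProduct hξx
  obtain rfl : a = fun y => (nsq ξ y)⁻¹ • ξ y := funext ha
  constructor
  · rw [div3_smul hinv hξx, hK.div3_eq_zero, hgrad, smul_dotProduct, hdot]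
    simp
  · have hcross := hK.cross3_curl3 hξx
    rw [cross3_eq_crossProduct] at hcross ⊢
    rw [curl3_smul hinv hξx, hgrad]
    simp only [map_add, map_smul, LinearMap.smul_apply, hcross,
      cross_cross_eq_smul_sub_smul', hdot, ← nsq_eq_dotProduct, zero_smul, sub_zero, smul_smul]
    match_scalars
    field_simp
    ring
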